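/- Fix ν ∈ ℕ₀ and for m ∈ ℤ define the complex-valued functions Φ_m(ω) = √2 (iω−1)^m/(iω+1)^{m+1} on ℝ (negative integer exponents interpreted as reciprocals of positive powers), and for 0 ≤ m ≤ ν define Ψ⁰_{m,ν}(ω) = (1/√2)(ν!/√((2ν)!)) ∑_{k=0}^{ν+1} C(ν+1,k)(−1)^k Φ_{−ν−1+m+k}(ω). Then for every m with 0 ≤ m ≤ ν and every ω ∈ ℝ one has Ψ⁰_{ν−m,ν}(ω) = (−1)^ν · conj(Ψ⁰_{m,ν}(ω)). -/

import Mathlib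

open Real Finset Complex

/-- Fourier transforms of the Laguerre functions:
`Φ_m(ω) = √2 (iω−1)^m/(iω+1)^{m+1}`, `m ∈ ℤ` (integer powers). -/
noncomputable def lagFT (m : ℤ) (ω : ℝ) : ℂ :=
  (Real.sqrt 2 : ℂ) * (Complex.I * ω - 1) ^ m / (Complex.I * ω + 1) ^ (m + 1)

/-- The Fourier transform of the null-space Matérn–Laguerre function `ψ⁰_{m,ν}`. -/
noncomputable def psiNullFT (ν m : ℕ) (ω : ℝ) : ℂ :=
  ((1 / Real.sqrt 2 : ℝ) : ℂ) *
    (((Nat.factorial ν : ℝ) / Real.sqrt (Nat.factorial (2 * ν)) : ℝ) : ℂ) *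
    ∑ k ∈ Finset.range (ν + 2),
      (Nat.choose (ν + 1) k : ℂ) * (-1) ^ k * lagFT (-(ν : ℤ) - 1 + (m : ℤ) + (k : ℤ)) ω

/-! The functions `Φ_m` are `√2 r^m / (iω+1)` for the unimodular Cayley ratio `r = (iω−1)/(iω+1)`.
Conjugation inverts `r` and turns `1/(iω+1)` into `−r⁻¹/(iω+1)`, so `conj Φ_n = −Φ_{−n−1}`.
In `Ψ⁰_{m,ν}` the indices `−ν−1+m+k` and `−ν−1+(ν−m)+(ν+1−k)` are exchanged by `n ↦ −n−1`, so
reflecting the alternating binomial sum `k ↦ ν+1−k` gives the symmetry, the signs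
`(−1)^(ν+1)` of the reflection and `−1` of `conj Φ` combining to `(−1)^ν`. -/

open ComplexConjugate

theorem neg_one_pow_mul_self {R : Type*} [Monoid R] [HasDistribNeg R] (n : ℕ) : (-1 : R) ^ n * (-1) ^ n = 1 := by
  rw [← pow_add, ← two_mul, pow_mul, neg_one_sq, one_pow]

theorem Finset.sum_range_choose_mul_neg_one_pow_reflect {R : Type*} [CommRing R] (N : ℕ)
    (f : ℕ → R) :
    ∑ k ∈ range (N + 1), (N.choose k : R) * (-1) ^ k * f (N - k) =
      (-1) ^ N * ∑ k ∈ range (N + 1), (N.choose k : R) * (-1) ^ k * f k := by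
  rw [← sum_range_reflect, mul_sum]
  refine sum_congr rfl fun k hk => ?_
  have hkN : k ≤ N := Nat.lt_succ_iff.mp (mem_range.mp hk)
  have hsign : (-1 : R) ^ (N - k) = (-1) ^ N * (-1) ^ k := by
    conv_rhs => rw [← Nat.sub_add_cancel hkN, pow_add, mul_assoc, neg_one_pow_mul_self, mul_one]
  rw [Nat.add_sub_cancel, Nat.choose_symm hkN, Nat.sub_sub_self hkN, hsign]
  ring

namespace Complex

theorem I_mul_ofReal_add_one_ne_zero (ω : ℝ) : I * ω + 1 ≠ 0 := by
  intro h
  simpa using congrArg re h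

theorem I_mul_ofReal_sub_one_ne_zero (ω : ℝ) : I * ω - 1 ≠ 0 := by
  intro h
  simpa using congrArg re h

theorem conj_I_mul_ofReal_add_one (ω : ℝ) : conj (I * ω + 1) = -(I * ω - 1) := by
  simp only [map_add, map_mul, conj_I, conj_ofReal, map_one]
  ring

theorem conj_I_mul_ofReal_sub_one (ω : ℝ) : conj (I * ω - 1) = -(I * ω + 1) := by
  simp only [map_sub, map_mul, conj_I, conj_ofReal, map_one]
  ring

noncomputable def cayleyRatio (ω : ℝ) : ℂ := (I * ω - 1) / (I * ω + 1)

theorem cayleyRatio_ne_zero (ω : ℝ) : cayleyRatio ω ≠ 0 :=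
  div_ne_zero (I_mul_ofReal_sub_one_ne_zero ω) (I_mul_ofReal_add_one_ne_zero ω)

theorem conj_cayleyRatio (ω : ℝ) : conj (cayleyRatio ω) = (cayleyRatio ω)⁻¹ := by
  rw [cayleyRatio, map_div₀, conj_I_mul_ofReal_sub_one, conj_I_mul_ofReal_add_one,
    neg_div_neg_eq, inv_div]

theorem conj_inv_I_mul_ofReal_add_one (ω : ℝ) :
    conj (I * ω + 1)⁻¹ = -(cayleyRatio ω)⁻¹ * (I * ω + 1)⁻¹ := by
  have ha := I_mul_ofReal_add_one_ne_zero ω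
  have hb := I_mul_ofReal_sub_one_ne_zero ω
  rw [map_inv₀, conj_I_mul_ofReal_add_one, cayleyRatio, inv_div]
  field_simp

end Complex

theorem lagFT_eq_cayleyRatio_zpow (n : ℤ) (ω : ℝ) :
    lagFT n ω = Real.sqrt 2 * cayleyRatio ω ^ n * (I * ω + 1)⁻¹ := by
  rw [lagFT, cayleyRatio, zpow_add_one₀ (I_mul_ofReal_add_one_ne_zero ω), div_zpow]
  field_simp

theorem conj_lagFT (n : ℤ) (ω : ℝ) : conj (lagFT n ω) = -lagFT (-n - 1) ω := by
  rw [lagFT_eq_cayleyRatio_zpow, lagFT_eq_cayleyRatio_zpow, map_mul, map_mul, map_zpow₀,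
    conj_ofReal, conj_cayleyRatio, conj_inv_I_mul_ofReal_add_one,
    zpow_sub_one₀ (cayleyRatio_ne_zero ω), inv_zpow']
  ring

/-- Fourier-domain null-space symmetry: `Ψ⁰_{ν−m,ν}(ω) = (−1)^ν conj(Ψ⁰_{m,ν}(ω))`. -/
theorem psiNullFT_conj_symmetry (ν m : ℕ) (hm : m ≤ ν) (ω : ℝ) :
    psiNullFT ν (ν - m) ω = (-1) ^ ν * (starRingEnd ℂ) (psiNullFT ν m ω) := by
  set c : ℂ := ((1 / Real.sqrt 2 : ℝ) : ℂ) *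
    (((Nat.factorial ν : ℝ) / Real.sqrt (Nat.factorial (2 * ν)) : ℝ) : ℂ)
  set f : ℕ → ℂ := fun j => lagFT ((j : ℤ) - m - 1) ω
  have hpsi : psiNullFT ν (ν - m) ω =
      c * ∑ k ∈ range (ν + 2), ((ν + 1).choose k : ℂ) * (-1) ^ k * f k := by
    refine congrArg (c * ·) (sum_congr rfl fun k _ => ?_)
    simp only [f, Nat.cast_sub hm]
    ring_nf
  have hconj : conj (psiNullFT ν m ω) =
      c * -∑ k ∈ range (ν + 2), ((ν + 1).choose k : ℂ) * (-1) ^ k * f (ν + 1 - k) := by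
    rw [psiNullFT, map_mul, map_mul, conj_ofReal, conj_ofReal, map_sum, ← sum_neg_distrib]
    refine congrArg (c * ·) (sum_congr rfl fun k hk => ?_)
    have hk : k ≤ ν + 1 := Nat.lt_succ_iff.mp (mem_range.mp hk)
    simp only [map_mul, map_pow, map_neg, map_one, map_natCast, conj_lagFT, f]
    push_cast [Nat.cast_sub hk]
    ring_nf
  rw [hpsi, hconj, sum_range_choose_mul_neg_one_pow_reflect, pow_succ]
  linear_combination (-(c * ∑ k ∈ range (ν + 2), ((ν + 1).choose k : ℂ) * (-1) ^ k * f k)) *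
    neg_one_pow_mul_self (R := ℂ) ν
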